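/- arXiv:0803.4182 — 6 statements merged into one kernel-verified Lean document; each statement's English description precedes it below -/
import Mathlib

section
/- With P_j^i[k] the weighted sum over partitions of length i, first part j, containing at least one part of each size j−1,...,j−k (weights given by critical positions), and letting ↑P denote the substitution b_u ← b_{u+1} for all u, one has for k ≥ 1: P_j^i[k] = (a_j + b_1)·↑P_j^{i-1}[k] + ↑P_{j-1}^{i-1}[k-1]. -/
open Finset

attribute [local instance] Classical.propDecidable

noncomputable section

/-- Critical positions of a partition (as a function `Fin n → ℕ`): 0-indexed
positions `u ≥ 1` with `lam u = lam (u-1)`. -/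
def crit {n : ℕ} (lam : Fin n → ℕ) : Finset (Fin n) :=
  univ.filter fun u => 1 ≤ u.1 ∧
    lam u = lam ⟨u.1 - 1, Nat.lt_of_le_of_lt (Nat.sub_le u.1 1) u.2⟩

/-- The weight of a partition: the product over critical positions `u` of
`a (λ_u) + b_{u-1}` (paper's 1-indexed convention; here `u` is 0-indexed, so the
factor is `a (lam u) + b u`). -/
def wt {R : Type*} [CommRing R] (a b : ℕ → R) {n : ℕ} (lam : Fin n → ℕ) : R :=
  ∏ u ∈ crit lam, (a (lam u) + b u.1)

/-- The finset of partitions of length `i`, with first part `j`, positive parts, and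
at least one part equal to `j - l` for each `l = 1, …, k`. -/
def PartSet (j i k : ℕ) : Finset (Fin i → ℕ) :=
  (Fintype.piFinset fun _ : Fin i => Finset.Icc 1 j).filter fun lam =>
    (∀ u v : Fin i, u ≤ v → lam v ≤ lam u) ∧
    (∃ h : 0 < i, lam ⟨0, h⟩ = j) ∧
    (∀ l, 1 ≤ l → l ≤ k → ∃ u, lam u = j - l)

/-- `P_j^i[k]`: the weighted sum over `PartSet j i k`. -/
def P {R : Type*} [CommRing R] (a b : ℕ → R) (j i k : ℕ) : R :=
  ∑ lam ∈ PartSet j i k, wt a b lam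

/-! Every partition `λ` counted by `P_j^i[k]` begins with `j`, so it is determined by its tail
`(λ_2, …, λ_i)`. Position 2 of `λ` is critical iff `λ_2 = j`, contributing `a_j + b_1`; any later
critical position `u` of `λ` is the critical position `u - 1` of the tail, and its factor
`a_{λ_u} + b_{u-1}` is the tail's factor with `b` shifted, so these factors make up `↑w(tail)`.
If `λ_2 = j` the tail ranges over `P_j^{i-1}[k]`. Otherwise the forced part `j - 1` makes
`λ_2 = j - 1`, and the tail ranges over `P_{j-1}^{i-1}[k-1]`. -/

section Weight

variable {R : Type*} [CommRing R] (a b : ℕ → R)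

lemma wt_eq_prod_succ {n : ℕ} (lam : Fin (n + 1) → ℕ) :
    wt a b lam = ∏ v : Fin n,
      if lam v.succ = lam v.castSucc then a (lam v.succ) + b (v + 1) else 1 := by
  rw [wt, crit, prod_filter, Fin.prod_univ_succ, if_neg fun h => absurd h.1 (by simp), one_mul]
  simp only [Fin.val_succ, le_add_iff_nonneg_left, zero_le, true_and, Nat.add_sub_cancel]
  rfl

lemma wt_cons {m : ℕ} (x : ℕ) (t : Fin (m + 1) → ℕ) :
    wt a b (Fin.cons x t) =
      (if t 0 = x then a x + b 1 else 1) * wt a (fun u => b (u + 1)) t := by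
  rw [wt_eq_prod_succ, wt_eq_prod_succ, Fin.prod_univ_succ]
  congr 1
  by_cases h : t 0 = x <;> simp [h]

end Weight

section Membership

variable {j k m : ℕ}

lemma mem_PartSet_succ {lam : Fin (m + 1) → ℕ} :
    lam ∈ PartSet j (m + 1) k ↔ (∀ v, lam v ∈ Icc 1 j) ∧ Antitone lam ∧ lam 0 = j ∧
      ∀ l, 1 ≤ l → l ≤ k → ∃ u, lam u = j - l := by
  simp only [PartSet, mem_filter, Fintype.mem_piFinset]
  exact Iff.rfl.and (Iff.rfl.and ((exists_prop_of_true m.succ_pos).and Iff.rfl))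

lemma head_eq_of_mem_PartSet {lam : Fin (m + 1) → ℕ} (h : lam ∈ PartSet j (m + 1) k) :
    lam 0 = j :=
  (mem_PartSet_succ.1 h).2.2.1

lemma cons_mem_PartSet_iff (hkj : k < j) {t : Fin (m + 1) → ℕ} :
    Fin.cons j t ∈ PartSet j (m + 2) k ↔ (∀ v, t v ∈ Icc 1 j) ∧ Antitone t ∧
      ∀ l, 1 ≤ l → l ≤ k → ∃ u, t u = j - l := by
  have hanti : Antitone (Fin.cons j t : Fin (m + 2) → ℕ) ↔ t 0 ≤ j ∧ Antitone t :=
    antitone_vecCons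
  have hparts : ∀ l, 1 ≤ l → l ≤ k →
      ((∃ u, (Fin.cons j t : Fin (m + 2) → ℕ) u = j - l) ↔ ∃ u, t u = j - l) := by
    intro l hl _
    rw [Fin.exists_fin_succ, Fin.cons_zero, or_iff_right (by omega)]
    simp only [Fin.cons_succ]
  rw [mem_PartSet_succ, Fin.forall_fin_succ, hanti, forall₃_congr hparts]
  simp only [Fin.cons_zero, Fin.cons_succ, mem_Icc, true_and]
  constructor
  · rintro ⟨⟨-, hbd⟩, ⟨-, hanti⟩, hparts⟩
    exact ⟨hbd, hanti, hparts⟩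
  · rintro ⟨hbd, hanti, hparts⟩
    exact ⟨⟨⟨by omega, le_rfl⟩, hbd⟩, ⟨(hbd 0).2, hanti⟩, hparts⟩

lemma cons_mem_PartSet_and_head_eq_iff (hkj : k < j) {t : Fin (m + 1) → ℕ} :
    Fin.cons j t ∈ PartSet j (m + 2) k ∧ t 0 = j ↔ t ∈ PartSet j (m + 1) k := by
  rw [cons_mem_PartSet_iff hkj, mem_PartSet_succ]
  tauto

lemma cons_mem_PartSet_and_head_ne_iff (hk : 1 ≤ k) (hkj : k < j) {t : Fin (m + 1) → ℕ} :
    Fin.cons j t ∈ PartSet j (m + 2) k ∧ t 0 ≠ j ↔ t ∈ PartSet (j - 1) (m + 1) (k - 1) := by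
  rw [cons_mem_PartSet_iff hkj, mem_PartSet_succ]
  simp only [mem_Icc]
  constructor
  · rintro ⟨⟨hbd, hanti, hparts⟩, hne⟩
    obtain ⟨u, hu⟩ := hparts 1 le_rfl hk
    have h0 : t 0 = j - 1 := by
      have := hanti (Fin.zero_le u)
      have := hbd 0
      omega
    refine ⟨fun v => ⟨(hbd v).1, h0 ▸ hanti (Fin.zero_le v)⟩, hanti, h0, fun l hl hlk => ?_⟩
    obtain ⟨u, hu⟩ := hparts (l + 1) (by omega) (by omega)
    exact ⟨u, by omega⟩
  · rintro ⟨hbd, hanti, h0, hparts⟩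
    refine ⟨⟨fun v => ⟨(hbd v).1, by have := hbd v; omega⟩, hanti, fun l hl hlk => ?_⟩, by omega⟩
    rcases eq_or_lt_of_le hl with rfl | hl
    · exact ⟨0, h0⟩
    · obtain ⟨u, hu⟩ := hparts (l - 1) (by omega) (by omega)
      exact ⟨u, by omega⟩

lemma sum_filter_PartSet_eq_sum_cons {M : Type*} [AddCommMonoid M]
    (f : (Fin (m + 1) → ℕ) → M) {q : (Fin m → ℕ) → Prop} [DecidablePred q]
    {S : Finset (Fin m → ℕ)}
    (hS : ∀ t, Fin.cons j t ∈ PartSet j (m + 1) k ∧ q t ↔ t ∈ S) :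
    ∑ lam ∈ (PartSet j (m + 1) k).filter (fun lam => q (Fin.tail lam)), f lam =
      ∑ t ∈ S, f (Fin.cons j t) := by
  have hcons : ∀ lam ∈ PartSet j (m + 1) k, Fin.cons j (Fin.tail lam) = lam := fun lam h =>
    head_eq_of_mem_PartSet h ▸ Fin.cons_self_tail lam
  refine sum_nbij' Fin.tail (Fin.cons (α := fun _ => ℕ) j) (fun lam hlam => ?_) (fun t ht => ?_)
    (fun lam hlam => ?_) (fun t _ => ?_) (fun lam hlam => ?_)
  · rw [mem_filter] at hlam
    rw [← hS, hcons _ hlam.1]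
    exact hlam
  · rw [← hS] at ht
    rwa [mem_filter, Fin.tail_cons]
  · exact hcons lam (mem_filter.1 hlam).1
  · exact Fin.tail_cons (α := fun _ => ℕ) j t
  · rw [hcons lam (mem_filter.1 hlam).1]

end Membership

/-- The recurrence for `P_j^i[k]`, `k ≥ 1`:
`P_j^i[k] = (a_j + b_1) ↑P_j^{i-1}[k] + ↑P_{j-1}^{i-1}[k-1]`, where `↑` is the
substitution `b_u ← b_{u+1}`. -/
theorem statement3 {R : Type*} [CommRing R] (a b : ℕ → R) (j i k : ℕ)
    (hk : 1 ≤ k) (hj : k < j) (hi : k < i) :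
    P a b j i k =
      (a j + b 1) * P a (fun u => b (u + 1)) j (i - 1) k +
        P a (fun u => b (u + 1)) (j - 1) (i - 1) (k - 1) := by
  obtain ⟨m, rfl⟩ : ∃ m, i = m + 1 + 1 := ⟨i - 2, by omega⟩
  rw [Nat.add_sub_cancel, P, ← sum_filter_add_sum_filter_not _ fun lam => Fin.tail lam 0 = j,
    sum_filter_PartSet_eq_sum_cons _ fun t => cons_mem_PartSet_and_head_eq_iff hj,
    sum_filter_PartSet_eq_sum_cons _ fun t => cons_mem_PartSet_and_head_ne_iff hk hj,
    P, P, mul_sum]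
  congr 1
  · refine sum_congr rfl fun t ht => ?_
    rw [wt_cons, if_pos (head_eq_of_mem_PartSet ht)]
  · refine sum_congr rfl fun t ht => ?_
    rw [wt_cons, if_neg (by rw [head_eq_of_mem_PartSet ht]; omega), one_mul]

end
end

section
/- (Gessel–Viennot cancellation for triangular tableaux) The signed weighted sum over all tuples (λ^{(1)},...,λ^{(m)}) of partitions of lengths 1,...,m with parts in {1,...,m} whose first parts form a permutation, equals the same sum restricted to non-intersecting tuples (those where for each j, the j-th parts of λ^{(j)},...,λ^{(m)} are pairwise distinct). Equivalently, the signed weighted sum over intersecting tuples is zero. -/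
/-!
On a tableau with distinct first parts that is intersecting, let `j` be the first column in
which two rows meet (`j > 0` because the first parts are distinct), `r₁` the first row involved
in such a meeting and `r₂` the first row meeting `r₁` there, and exchange the parts of rows `r₁`
and `r₂` in the columns before `j`. Both rows stay weakly decreasing because they agree in column
`j`, and the product of the row weights is unchanged, because the factor at position `k` only
depends on `k` and on the parts at `k - 1` and `k`. The first parts are transposed, so the sign
changes. Columns before `j` are only permuted between rows and the later ones are untouched, so
the same `j`, `r₁`, `r₂` are chosen again and the map is an involution: the intersecting
tableaux cancel in pairs.
-/

open Finset

attribute [local instance] Classical.propDecidable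

noncomputable section

/-- A triangular tableau: row `i` (0-indexed) has `i+1` parts. -/
abbrev Tab (m : ℕ) := ∀ i : Fin m, Fin (i.1 + 1) → ℕ

/-- The finset of weakly decreasing rows of length `i+1` with parts in `{1,…,m}`. -/
def rowFinset (m : ℕ) (i : Fin m) : Finset (Fin (i.1 + 1) → ℕ) :=
  (Fintype.piFinset fun _ => Finset.Icc 1 m).filter fun lam =>
    ∀ u v : Fin (i.1 + 1), u ≤ v → lam v ≤ lam u

/-- The finset of triangular tableaux with rows of lengths `1,…,m` and parts in `{1,…,m}`. -/
def tabFinset (m : ℕ) : Finset (Tab m) :=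
  Fintype.piFinset fun i => rowFinset m i

/-- Non-intersecting: for every column `j` (0-indexed), the entries in column `j`
of the rows `j,…,m-1` are pairwise distinct. -/
def NonInt {m : ℕ} (T : Tab m) : Prop :=
  ∀ (i i' : Fin m) (j : ℕ) (h : j ≤ i.1) (h' : j ≤ i'.1),
    T i ⟨j, Nat.lt_succ_of_le h⟩ = T i' ⟨j, Nat.lt_succ_of_le h'⟩ → i = i'

/-- The sequence of first parts of a triangular tableau. -/
def firsts {m : ℕ} (T : Tab m) : Fin m → ℕ := fun i => T i ⟨0, Nat.succ_pos _⟩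

/-- The sign of a sequence, as `(-1)` to the number of inversions.  When the
sequence is a bijection onto `{1,…,m}` this is the sign of the corresponding
permutation. -/
def sgn {m : ℕ} (f : Fin m → ℕ) : ℤ :=
  (-1) ^ ((univ : Finset (Fin m × Fin m)).filter fun p => p.1 < p.2 ∧ f p.2 < f p.1).card

theorem sgn_eq_sign {m : ℕ} {f : Fin m → ℕ} {σ : Equiv.Perm (Fin m)}
    (h : ∀ p q, f p < f q ↔ σ p < σ q) : sgn f = σ.sign := by
  rw [σ.sign_eq_prod_prod_Ioi, sgn, ← prod_const, prod_filter, Fintype.prod_prod_type]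
  push_cast
  refine prod_congr rfl fun p _ => ?_
  rw [← filter_lt_eq_Ioi, prod_filter]
  refine prod_congr rfl fun q _ => ?_
  by_cases hpq : p < q
  · have hne : σ p ≠ σ q := σ.injective.ne hpq.ne
    simp only [hpq, true_and, if_true, h, ← not_le (b := σ q), hne.le_iff_lt]
    split_ifs <;> rfl
  · simp [hpq]

theorem exists_perm_lt_iff_of_injective {α : Type*} [LinearOrder α] {m : ℕ} {f : Fin m → α}
    (hf : Function.Injective f) : ∃ σ : Equiv.Perm (Fin m), ∀ p q, f p < f q ↔ σ p < σ q := by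
  have hmono : StrictMono (f ∘ Tuple.sort f) :=
    (Tuple.monotone_sort f).strictMono_of_injective (hf.comp (Tuple.sort f).injective)
  refine ⟨(Tuple.sort f).symm, fun p q => ?_⟩
  rw [← hmono.lt_iff_lt]
  simp

theorem sgn_comp_swap {m : ℕ} {f : Fin m → ℕ} (hf : Function.Injective f) {x y : Fin m}
    (hxy : x ≠ y) : sgn (f ∘ Equiv.swap x y) = -sgn f := by
  obtain ⟨σ, hσ⟩ := exists_perm_lt_iff_of_injective hf
  have hσ' : ∀ p q, (f ∘ Equiv.swap x y) p < (f ∘ Equiv.swap x y) q ↔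
      (σ * Equiv.swap x y) p < (σ * Equiv.swap x y) q := fun p q => hσ _ _
  rw [sgn_eq_sign hσ, sgn_eq_sign hσ', Equiv.Perm.sign_mul, Equiv.Perm.sign_swap hxy]
  simp

section Entries

variable {m : ℕ}

/-- Entry `k` of row `n`, extended by `0` outside the triangle. -/
def ent (T : Tab m) (n k : ℕ) : ℕ :=
  if h : n < m ∧ k ≤ n then T ⟨n, h.1⟩ ⟨k, Nat.lt_succ_of_le h.2⟩ else 0

theorem ent_eq (T : Tab m) (i : Fin m) (u : Fin (i.1 + 1)) : ent T i u = T i u := by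
  rw [ent, dif_pos ⟨i.2, Nat.le_of_lt_succ u.2⟩]

theorem ent_of_le (T : Tab m) {n k : ℕ} (hn : n < m) (hk : k ≤ n) :
    ent T n k = T ⟨n, hn⟩ ⟨k, Nat.lt_succ_of_le hk⟩ :=
  dif_pos ⟨hn, hk⟩

theorem ent_eq_zero {T : Tab m} {n k : ℕ} (h : ¬ (n < m ∧ k ≤ n)) : ent T n k = 0 :=
  dif_neg h

theorem Tab.ext_ent {T T' : Tab m} (h : ∀ n k, ent T n k = ent T' n k) : T = T' := by
  funext i u
  rw [← ent_eq T, ← ent_eq T', h]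

theorem mem_tabFinset_iff {T : Tab m} :
    T ∈ tabFinset m ↔ ∀ n < m, ∀ k ≤ n,
      ent T n k ∈ Icc 1 m ∧ ∀ l, k ≤ l → l ≤ n → ent T n l ≤ ent T n k := by
  simp only [tabFinset, rowFinset, Fintype.mem_piFinset, mem_filter]
  constructor
  · rintro hT n hn k hk
    refine ⟨?_, fun l hkl hl => ?_⟩
    · rw [ent_of_le T hn hk]
      exact (hT ⟨n, hn⟩).1 _
    · rw [ent_of_le T hn hl, ent_of_le T hn hk]
      exact (hT ⟨n, hn⟩).2 _ _ hkl
  · intro hT i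
    refine ⟨fun u => ?_, fun u v huv => ?_⟩
    · rw [← ent_eq T]
      exact (hT i i.2 u (Nat.le_of_lt_succ u.2)).1
    · rw [← ent_eq T, ← ent_eq T]
      exact (hT i i.2 u (Nat.le_of_lt_succ u.2)).2 v huv (Nat.le_of_lt_succ v.2)

end Entries

section Crossing

variable {m : ℕ}

def IsCrossing (T : Tab m) (j p q : ℕ) : Prop :=
  p < m ∧ q < m ∧ p ≠ q ∧ j ≤ p ∧ j ≤ q ∧ ent T p j = ent T q j

theorem not_nonInt_iff {T : Tab m} : ¬ NonInt T ↔ ∃ j p q, IsCrossing T j p q := by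
  constructor
  · intro h
    simp only [NonInt, not_forall] at h
    obtain ⟨i, i', j, hj, hj', heq, hne⟩ := h
    refine ⟨j, i, i', i.2, i'.2, fun h => hne (Fin.ext h), hj, hj', ?_⟩
    rwa [ent_eq T i ⟨j, _⟩, ent_eq T i' ⟨j, _⟩]
  · rintro ⟨j, p, q, hp, hq, hpq, hjp, hjq, he⟩ hT
    rw [ent_of_le T hp hjp, ent_of_le T hq hjq] at he
    exact hpq (Fin.ext_iff.mp (hT ⟨p, hp⟩ ⟨q, hq⟩ j hjp hjq he))

theorem not_isCrossing_zero {T : Tab m} (hT : Function.Injective (firsts T)) (p q : ℕ) :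
    ¬ IsCrossing T 0 p q := by
  rintro ⟨hp, hq, hpq, -, -, he⟩
  rw [ent_of_le T hp p.zero_le, ent_of_le T hq q.zero_le] at he
  exact hpq (Fin.ext_iff.mp (hT he))

end Crossing

section SwapPrefix

open Equiv

variable {m : ℕ} {n₁ n₂ j : ℕ}

/-- Meant for `j ≤ n₁, n₂ < m`; otherwise `ent` may read outside the triangle and give `0`. -/
def swapPrefix (T : Tab m) (n₁ n₂ j : ℕ) : Tab m := fun i u =>
  if u.1 < j then ent T (swap n₁ n₂ i) u else T i u

theorem ent_swapPrefix_of_le (T : Tab m) {k : ℕ} (hk : j ≤ k) (n : ℕ) :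
    ent (swapPrefix T n₁ n₂ j) n k = ent T n k := by
  by_cases h : n < m ∧ k ≤ n
  · rw [ent_of_le _ h.1 h.2, ent_of_le _ h.1 h.2, swapPrefix, if_neg (by simpa using hk)]
  · rw [ent_eq_zero h, ent_eq_zero h]

theorem swap_apply_lt_iff (h₁ : n₁ < m) (h₂ : n₂ < m) {n : ℕ} : swap n₁ n₂ n < m ↔ n < m := by
  rw [swap_apply_def]
  split_ifs <;> simp_all

theorem le_swap_apply_iff (hj₁ : j ≤ n₁) (hj₂ : j ≤ n₂) {c n : ℕ} (hc : c ≤ j) :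
    c ≤ swap n₁ n₂ n ↔ c ≤ n := by
  rw [swap_apply_def]
  split_ifs <;> omega

theorem ent_swapPrefix_of_lt (h₁ : n₁ < m) (h₂ : n₂ < m) (hj₁ : j ≤ n₁) (hj₂ : j ≤ n₂)
    (T : Tab m) {k : ℕ} (hk : k < j) (n : ℕ) :
    ent (swapPrefix T n₁ n₂ j) n k = ent T (swap n₁ n₂ n) k := by
  by_cases h : n < m ∧ k ≤ n
  · rw [ent_of_le _ h.1 h.2, swapPrefix, if_pos hk]
  · have : swap n₁ n₂ n = n := swap_apply_of_ne_of_ne (by omega) (by omega)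
    rw [this, ent_eq_zero h, ent_eq_zero h]

theorem swapPrefix_swapPrefix (h₁ : n₁ < m) (h₂ : n₂ < m) (hj₁ : j ≤ n₁) (hj₂ : j ≤ n₂)
    (T : Tab m) : swapPrefix (swapPrefix T n₁ n₂ j) n₁ n₂ j = T := by
  refine Tab.ext_ent fun n k => ?_
  rcases lt_or_ge k j with hk | hk
  · rw [ent_swapPrefix_of_lt h₁ h₂ hj₁ hj₂ _ hk, ent_swapPrefix_of_lt h₁ h₂ hj₁ hj₂ _ hk,
      swap_apply_self]
  · rw [ent_swapPrefix_of_le _ hk, ent_swapPrefix_of_le _ hk]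

theorem firsts_swapPrefix (h₁ : n₁ < m) (h₂ : n₂ < m) (hj : 0 < j) (T : Tab m) :
    firsts (swapPrefix T n₁ n₂ j) = firsts T ∘ swap ⟨n₁, h₁⟩ ⟨n₂, h₂⟩ := by
  funext i
  rw [firsts, swapPrefix, if_pos hj, Function.comp_apply, firsts, ← ent_eq T]
  congr 1
  exact Fin.val_injective.swap_apply ⟨n₁, h₁⟩ ⟨n₂, h₂⟩ i

theorem swapPrefix_mem_tabFinset (h₁ : n₁ < m) (h₂ : n₂ < m) (hj₁ : j ≤ n₁) (hj₂ : j ≤ n₂)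
    {T : Tab m} (hT : T ∈ tabFinset m) (hcol : ent T n₁ j = ent T n₂ j) :
    swapPrefix T n₁ n₂ j ∈ tabFinset m := by
  have hswap_col : ∀ n, ent T (swap n₁ n₂ n) j = ent T n j := by
    intro n
    rw [swap_apply_def]
    split_ifs with e₁ e₂
    · rw [e₁, hcol]
    · rw [e₂, hcol]
    · rfl
  rw [mem_tabFinset_iff] at hT ⊢
  intro n hn k hk
  have hn' := (swap_apply_lt_iff h₁ h₂).mpr hn
  rcases lt_or_ge k j with hkj | hjk
  · have hk' := (le_swap_apply_iff hj₁ hj₂ hkj.le).mpr hk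
    rw [ent_swapPrefix_of_lt h₁ h₂ hj₁ hj₂ _ hkj]
    refine ⟨(hT _ hn' k hk').1, fun l hkl hl => ?_⟩
    rcases lt_or_ge l j with hlj | hjl
    · rw [ent_swapPrefix_of_lt h₁ h₂ hj₁ hj₂ _ hlj]
      exact (hT _ hn' k hk').2 l hkl ((le_swap_apply_iff hj₁ hj₂ hlj.le).mpr hl)
    · rw [ent_swapPrefix_of_le _ hjl]
      calc ent T n l ≤ ent T n j := (hT n hn j (hjl.trans hl)).2 l hjl hl
        _ = ent T (swap n₁ n₂ n) j := (hswap_col n).symm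
        _ ≤ ent T (swap n₁ n₂ n) k :=
          (hT _ hn' k hk').2 j hkj.le ((le_swap_apply_iff hj₁ hj₂ le_rfl).mpr (hjl.trans hl))
  · simp only [ent_swapPrefix_of_le _ hjk]
    refine ⟨(hT n hn k hk).1, fun l hkl hl => ?_⟩
    rw [ent_swapPrefix_of_le _ (hjk.trans hkl)]
    exact (hT n hn k hk).2 l hkl hl

theorem isCrossing_swapPrefix_of_le (T : Tab m) {j' : ℕ} (hj : j ≤ j') (p q : ℕ) :
    IsCrossing (swapPrefix T n₁ n₂ j) j' p q ↔ IsCrossing T j' p q := by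
  simp only [IsCrossing, ent_swapPrefix_of_le T hj]

theorem isCrossing_swapPrefix_of_lt (h₁ : n₁ < m) (h₂ : n₂ < m) (hj₁ : j ≤ n₁) (hj₂ : j ≤ n₂)
    (T : Tab m) {j' : ℕ} (hj : j' < j) (p q : ℕ) :
    IsCrossing (swapPrefix T n₁ n₂ j) j' p q ↔
      IsCrossing T j' (swap n₁ n₂ p) (swap n₁ n₂ q) := by
  simp only [IsCrossing, ent_swapPrefix_of_lt h₁ h₂ hj₁ hj₂ T hj, swap_apply_lt_iff h₁ h₂,
    le_swap_apply_iff hj₁ hj₂ hj.le, (swap n₁ n₂).injective.ne_iff]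

theorem exists_isCrossing_swapPrefix_iff (h₁ : n₁ < m) (h₂ : n₂ < m) (hj₁ : j ≤ n₁)
    (hj₂ : j ≤ n₂) (T : Tab m) (j' : ℕ) :
    (∃ p q, IsCrossing (swapPrefix T n₁ n₂ j) j' p q) ↔ ∃ p q, IsCrossing T j' p q := by
  rcases lt_or_ge j' j with hj | hj
  · simp only [isCrossing_swapPrefix_of_lt h₁ h₂ hj₁ hj₂ T hj]
    exact (swap n₁ n₂).exists_congr fun p => (swap n₁ n₂).exists_congr fun q => Iff.rfl
  · simp only [isCrossing_swapPrefix_of_le T hj]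

end SwapPrefix

section Weight

variable {R : Type*} [CommRing R] (a b : ℕ → R)

def wtFactor (r : ℕ → ℕ) (k : ℕ) : R :=
  if 0 < k ∧ r k = r (k - 1) then a (r k) + b k else 1

def rowWt (r : ℕ → ℕ) (n : ℕ) : R :=
  ∏ k ∈ range (n + 1), wtFactor a b r k

theorem wt_eq_rowWt {m : ℕ} (T : Tab m) (i : Fin m) :
    wt a b (T i) = rowWt a b (ent T i) i := by
  rw [wt, crit, prod_filter, rowWt, ← Fin.prod_univ_eq_prod_range]
  refine prod_congr rfl fun u _ => ?_
  rw [wtFactor, ent_eq, ← ent_eq T i ⟨u - 1, _⟩]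
  rfl

theorem rowWt_splice {r s : ℕ → ℕ} {j n : ℕ} (hrs : r j = s j) (hj : j ≤ n) :
    rowWt a b (fun k => if k < j then s k else r k) n =
      (∏ k ∈ range (j + 1), wtFactor a b s k) * ∏ k ∈ Ico (j + 1) (n + 1), wtFactor a b r k := by
  rw [rowWt, ← prod_range_mul_prod_Ico _ (Nat.succ_le_succ hj)]
  congr 1
  · refine prod_congr rfl fun k hk => ?_
    have hk := mem_range.mp hk
    rcases (Nat.lt_succ_iff.mp hk).lt_or_eq with hkj | rfl
    · simp only [wtFactor, hkj, if_true, show k - 1 < j by omega]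
    · rcases Nat.eq_zero_or_pos k with rfl | hk0
      · simp only [wtFactor, lt_irrefl, false_and, if_false]
      · simp only [wtFactor, lt_irrefl, if_false, show k - 1 < k by omega, if_true, hrs]
  · refine prod_congr rfl fun k hk => ?_
    have hk := (mem_Ico.mp hk).1
    simp only [wtFactor, show ¬ k < j by omega, show ¬ k - 1 < j by omega, if_false]

theorem rowWt_splice_mul_rowWt_splice {r s : ℕ → ℕ} {j n n' : ℕ} (hrs : r j = s j)
    (hj : j ≤ n) (hj' : j ≤ n') :
    rowWt a b (fun k => if k < j then s k else r k) n *
        rowWt a b (fun k => if k < j then r k else s k) n' =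
      rowWt a b r n * rowWt a b s n' := by
  rw [rowWt_splice a b hrs hj, rowWt_splice a b hrs.symm hj', rowWt, rowWt,
    ← prod_range_mul_prod_Ico _ (Nat.succ_le_succ hj),
    ← prod_range_mul_prod_Ico _ (Nat.succ_le_succ hj')]
  ring

end Weight

theorem Fintype.prod_eq_prod_of_eq_off_pair {ι M : Type*} [Fintype ι] [DecidableEq ι]
    [CommMonoid M] {f g : ι → M} {x y : ι} (hxy : x ≠ y) (hpair : f x * f y = g x * g y)
    (h : ∀ i, i ≠ x → i ≠ y → f i = g i) : ∏ i, f i = ∏ i, g i := by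
  rw [← Finset.prod_mul_prod_compl {x, y} f, ← Finset.prod_mul_prod_compl {x, y} g,
    prod_pair hxy, prod_pair hxy, hpair]
  congr 1
  refine Finset.prod_congr rfl fun i hi => ?_
  simp only [mem_compl, mem_insert, mem_singleton, not_or] at hi
  exact h i hi.1 hi.2

theorem IsCrossing.prod_wt_swapPrefix {R : Type*} [CommRing R] (a b : ℕ → R) {m j n₁ n₂ : ℕ}
    {T : Tab m} (hc : IsCrossing T j n₁ n₂) :
    ∏ i : Fin m, wt a b (swapPrefix T n₁ n₂ j i) = ∏ i : Fin m, wt a b (T i) := by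
  obtain ⟨h₁, h₂, hne, hj₁, hj₂, hcol⟩ := hc
  have hrow : ∀ n, ent (swapPrefix T n₁ n₂ j) n =
      fun k => if k < j then ent T (Equiv.swap n₁ n₂ n) k else ent T n k := by
    intro n
    funext k
    split_ifs with hk
    · exact ent_swapPrefix_of_lt h₁ h₂ hj₁ hj₂ T hk n
    · exact ent_swapPrefix_of_le T (not_lt.mp hk) n
  simp only [wt_eq_rowWt]
  refine Fintype.prod_eq_prod_of_eq_off_pair (x := ⟨n₁, h₁⟩) (y := ⟨n₂, h₂⟩)
    (Fin.ne_of_val_ne hne) ?_ fun i hi₁ hi₂ => ?_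
  · simp only [hrow, Equiv.swap_apply_left, Equiv.swap_apply_right]
    exact rowWt_splice_mul_rowWt_splice a b hcol hj₁ hj₂
  · rw [hrow, Equiv.swap_apply_of_ne_of_ne (Fin.val_ne_of_ne hi₁) (Fin.val_ne_of_ne hi₂)]
    simp only [ite_self]

section Involution

variable {m : ℕ}

def crossingCol (T : Tab m) : ℕ := sInf {j | ∃ p q, IsCrossing T j p q}

def crossingRow₁ (T : Tab m) : ℕ := sInf {p | ∃ q, IsCrossing T (crossingCol T) p q}

def crossingRow₂ (T : Tab m) : ℕ := sInf {q | IsCrossing T (crossingCol T) (crossingRow₁ T) q}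

theorem isCrossing_crossingCol {T : Tab m} (h : ¬ NonInt T) :
    IsCrossing T (crossingCol T) (crossingRow₁ T) (crossingRow₂ T) := by
  obtain ⟨j, hj⟩ := not_nonInt_iff.mp h
  obtain ⟨p, hp⟩ := Nat.sInf_mem (s := {j | ∃ p q, IsCrossing T j p q}) ⟨j, hj⟩
  obtain ⟨q, hq⟩ := Nat.sInf_mem (s := {p | ∃ q, IsCrossing T (crossingCol T) p q}) ⟨p, hp⟩
  exact Nat.sInf_mem (s := {q | IsCrossing T (crossingCol T) (crossingRow₁ T) q}) ⟨q, hq⟩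

theorem crossing_eq_of_iff {T T' : Tab m}
    (hcol : ∀ j, (∃ p q, IsCrossing T' j p q) ↔ ∃ p q, IsCrossing T j p q)
    (hrow : ∀ p q, IsCrossing T' (crossingCol T) p q ↔ IsCrossing T (crossingCol T) p q) :
    crossingCol T' = crossingCol T ∧ crossingRow₁ T' = crossingRow₁ T ∧
      crossingRow₂ T' = crossingRow₂ T := by
  have hc : crossingCol T' = crossingCol T := congrArg sInf (Set.ext hcol)
  have hr₁ : crossingRow₁ T' = crossingRow₁ T := by
    simp only [crossingRow₁, hc, hrow]
  refine ⟨hc, hr₁, ?_⟩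
  simp only [crossingRow₂, hc, hr₁, hrow]

def gvSwap (T : Tab m) : Tab m := swapPrefix T (crossingRow₁ T) (crossingRow₂ T) (crossingCol T)

variable {T : Tab m}

theorem crossing_gvSwap (h : ¬ NonInt T) :
    crossingCol (gvSwap T) = crossingCol T ∧ crossingRow₁ (gvSwap T) = crossingRow₁ T ∧
      crossingRow₂ (gvSwap T) = crossingRow₂ T := by
  obtain ⟨h₁, h₂, -, hj₁, hj₂, -⟩ := isCrossing_crossingCol h
  exact crossing_eq_of_iff (exists_isCrossing_swapPrefix_iff h₁ h₂ hj₁ hj₂ T)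
    (isCrossing_swapPrefix_of_le T le_rfl)

theorem gvSwap_gvSwap (h : ¬ NonInt T) : gvSwap (gvSwap T) = T := by
  obtain ⟨h₁, h₂, -, hj₁, hj₂, -⟩ := isCrossing_crossingCol h
  obtain ⟨hc, hr₁, hr₂⟩ := crossing_gvSwap h
  rw [gvSwap, hc, hr₁, hr₂]
  exact swapPrefix_swapPrefix h₁ h₂ hj₁ hj₂ T

theorem not_nonInt_gvSwap (h : ¬ NonInt T) : ¬ NonInt (gvSwap T) :=
  not_nonInt_iff.mpr ⟨_, _, _, (isCrossing_swapPrefix_of_le T le_rfl _ _).mpr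
    (isCrossing_crossingCol h)⟩

theorem gvSwap_mem_tabFinset (hT : T ∈ tabFinset m) (h : ¬ NonInt T) :
    gvSwap T ∈ tabFinset m := by
  obtain ⟨h₁, h₂, -, hj₁, hj₂, hcol⟩ := isCrossing_crossingCol h
  exact swapPrefix_mem_tabFinset h₁ h₂ hj₁ hj₂ hT hcol

theorem prod_wt_gvSwap {R : Type*} [CommRing R] (a b : ℕ → R) (h : ¬ NonInt T) :
    ∏ i : Fin m, wt a b (gvSwap T i) = ∏ i : Fin m, wt a b (T i) :=
  (isCrossing_crossingCol h).prod_wt_swapPrefix a b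

theorem firsts_gvSwap (hinj : Function.Injective (firsts T)) (h : ¬ NonInt T) :
    ∃ x y : Fin m, x ≠ y ∧ firsts (gvSwap T) = firsts T ∘ Equiv.swap x y := by
  obtain ⟨h₁, h₂, hne, -, -, -⟩ := isCrossing_crossingCol h
  have hpos : 0 < crossingCol T := Nat.pos_of_ne_zero fun h0 =>
    not_isCrossing_zero hinj _ _ (h0 ▸ isCrossing_crossingCol h)
  exact ⟨_, _, Fin.ne_of_val_ne hne, firsts_swapPrefix h₁ h₂ hpos T⟩

end Involution

theorem sum_intersecting_eq_zero {R : Type*} [CommRing R] (m : ℕ) (a b : ℕ → R) :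
    ∑ T ∈ (tabFinset m).filter (fun T => Function.Injective (firsts T) ∧ ¬ NonInt T),
      sgn (firsts T) • ∏ i : Fin m, wt a b (T i) = 0 := by
  refine sum_involution (fun T _ => gvSwap T) (fun T hT => ?_) (fun T hT _ => ?_)
    (fun T hT => ?_) (fun T hT => gvSwap_gvSwap (mem_filter.mp hT).2.2)
  all_goals
    obtain ⟨hT, hinj, hNI⟩ := mem_filter.mp hT
    obtain ⟨x, y, hxy, hfirsts⟩ := firsts_gvSwap hinj hNI
  · rw [prod_wt_gvSwap a b hNI, hfirsts, sgn_comp_swap hinj hxy, neg_smul, add_neg_cancel]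
  · intro hfix
    rw [hfix] at hfirsts
    exact hxy (hinj ((congrFun hfirsts x).trans (by simp)))
  · rw [mem_filter, hfirsts]
    exact ⟨gvSwap_mem_tabFinset hT hNI, hinj.comp (Equiv.injective _), not_nonInt_gvSwap hNI⟩

/-- Gessel–Viennot cancellation: the signed weighted sum over all triangular
tableaux whose first parts form a permutation equals the same sum restricted to
non-intersecting tableaux. -/
theorem statement9 {R : Type*} [CommRing R] (m : ℕ) (a b : ℕ → R) :
    ∑ T ∈ (tabFinset m).filter (fun T => Function.Injective (firsts T)),
        sgn (firsts T) • ∏ i : Fin m, wt a b (T i) =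
      ∑ T ∈ (tabFinset m).filter NonInt,
        sgn (firsts T) • ∏ i : Fin m, wt a b (T i) := by
  have hinj : ∀ T : Tab m, NonInt T → Function.Injective (firsts T) := fun T hT i i' h =>
    hT i i' 0 i.1.zero_le i'.1.zero_le h
  rw [← sum_filter_add_sum_filter_not _ NonInt, filter_filter, filter_filter,
    sum_intersecting_eq_zero, add_zero]
  exact sum_congr (filter_congr fun T _ => ⟨And.right, fun h => ⟨hinj T h, h⟩⟩) fun _ _ => rfl

end
end

section
/- The map ι on non-intersecting triangular tableaux compatible with γ' but not with γ — defined by locating the minimal j_min > i_k such that some row r has its j_min-th part equal to k, setting ℓ = j_min − 1, and exchanging the initial segments of length ℓ of rows ℓ and r — is a well-defined involution without fixed points on this set, and it reverses the sign of the attached permutation. -/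
open Finset

attribute [local instance] Classical.propDecidable

noncomputable section

/-- A row of length `n` is compatible with `γ` if, for every (0-indexed) position
`u ≥ 1`, the part `lam u` exceeds the number of `1`s among `γ_1,…,γ_u`. -/
def RowCompat (γ : ℕ → Bool) {n : ℕ} (lam : Fin n → ℕ) : Prop :=
  ∀ u : Fin n, 1 ≤ u.1 →
    ((Finset.Icc 1 u.1).filter fun l => γ l = true).card < lam u

/-- A triangular tableau is compatible with `γ` if all its rows are. -/
def Compat {m : ℕ} (γ : ℕ → Bool) (T : Tab m) : Prop := ∀ i, RowCompat γ (T i)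

/-- Exchange the initial segments of length `c` (0-indexed columns `< c`) of row
`c - 1` (0-indexed, i.e. paper's row `ℓ = c`) and row `r`; all other rows are kept. -/
def swapRows (m : ℕ) (c : ℕ) (r : Fin m) (T : Tab m) : Tab m := fun i u =>
  if i.1 = c - 1 then
    (if h : u.1 ≤ r.1 then T r ⟨u.1, Nat.lt_succ_of_le h⟩ else T i u)
  else if i = r then
    (if h2 : u.1 < c then
      (if hc : c - 1 < m then T ⟨c - 1, hc⟩ ⟨u.1, (by omega : u.1 < c - 1 + 1)⟩ else T i u)
     else T i u)
  else T i u

/-! Read column by column, exchanging rows `ℓ = c - 1` and `r` permutes the parts of every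
column `j ≤ ℓ` by the transposition `(ℓ r)` and leaves the columns `j > ℓ` alone.  Hence
non-intersection, compatibility with `γ'`, involutivity and the transposed first column (so
the sign change) come for free.  The one thing to check is that the new row `r` is weakly
decreasing where its two pieces meet: compatibility with `γ'` forces every part in a column
`≥ i_k - 1` to be at least `k`, so `T ℓ ℓ ≥ k = T r (ℓ + 1)`.  That `k` in row `r` is not
moved, so the image is still incompatible with `γ`. -/

theorem sgn_eq_prod_sign {m : ℕ} {f : Fin m → ℕ} (hf : Function.Injective f) :
    sgn f = ∏ j, ∏ i ∈ Iio j, Int.sign ((f j : ℤ) - f i) := by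
  rw [sgn, ← filter_filter, ← prod_const, prod_filter,
    prod_finset_product_right _ univ Iio (by simp)]
  refine prod_congr rfl fun j _ => prod_congr rfl fun i hi => ?_
  have hne : f i ≠ f j := hf.ne (mem_Iio.mp hi).ne
  dsimp only
  split_ifs with h
  · exact (Int.sign_eq_neg_one_of_neg (by omega)).symm
  · exact (Int.sign_eq_one_of_pos (by omega)).symm

theorem sgn_comp_perm {m : ℕ} {f : Fin m → ℕ} (hf : Function.Injective f)
    (π : Equiv.Perm (Fin m)) : sgn (f ∘ π) = Equiv.Perm.sign π * sgn f := by
  rw [sgn_eq_prod_sign hf, sgn_eq_prod_sign (hf.comp π.injective)]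
  exact π.prod_Iio_comp_eq_sign_mul_prod (f := fun i j => Int.sign ((f j : ℤ) - f i))
    fun i j => by rw [← Int.sign_neg, neg_sub]

theorem mem_tabFinset_iff_s14 {m : ℕ} {T : Tab m} :
    T ∈ tabFinset m ↔ (∀ i u, T i u ∈ Icc 1 m) ∧ ∀ i, Antitone (T i) := by
  simp only [tabFinset, rowFinset, Fintype.mem_piFinset, mem_filter, forall_and]
  rfl

theorem Tab.apply_congr {m : ℕ} (T : Tab m) {i i' : Fin m} (h : i = i') (j : ℕ)
    (hj : j < i.1 + 1) (hj' : j < i'.1 + 1) : T i ⟨j, hj⟩ = T i' ⟨j, hj'⟩ := by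
  subst h; rfl

theorem le_swap_apply {m j : ℕ} {ℓ r i : Fin m} (hℓr : ℓ ≤ r) (hjℓ : j ≤ ℓ.1)
    (hji : j ≤ i.1) : j ≤ (Equiv.swap ℓ r i).1 := by
  rcases eq_or_ne i ℓ with rfl | hiℓ
  · rw [Equiv.swap_apply_left]; exact hjℓ.trans hℓr
  rcases eq_or_ne i r with rfl | hir
  · rwa [Equiv.swap_apply_right]
  · rwa [Equiv.swap_apply_of_ne_of_ne hiℓ hir]

theorem NonInt.injective_firsts {m : ℕ} {T : Tab m} (hT : NonInt T) :
    Function.Injective (firsts T) :=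
  fun i i' h => hT i i' 0 (Nat.zero_le _) (Nat.zero_le _) h

section swapRows

variable {m : ℕ} {ℓ r : Fin m}

theorem swapRows_apply_of_le (hℓr : ℓ < r) (T : Tab m) (i : Fin m) (u : Fin (i.1 + 1))
    (hu : u.1 ≤ ℓ.1) :
    swapRows m (ℓ.1 + 1) r T i u =
      T (Equiv.swap ℓ r i) ⟨u.1, Nat.lt_succ_of_le (le_swap_apply hℓr.le hu (Fin.is_le u))⟩ := by
  have hℓ : ℓ.1 + 1 - 1 = ℓ.1 := rfl
  rcases eq_or_ne i ℓ with rfl | hiℓ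
  · simp only [swapRows, hℓ, if_true, dif_pos (hu.trans hℓr.le)]
    exact T.apply_congr (Equiv.swap_apply_left i r).symm _ _ _
  rcases eq_or_ne i r with rfl | hir
  · have hri : i.1 ≠ ℓ.1 := by have := hℓr.ne'; omega
    simp only [swapRows, hℓ, if_neg hri, if_true, dif_pos (Nat.lt_succ_of_le hu),
      dif_pos ℓ.2]
    exact T.apply_congr (Equiv.swap_apply_right ℓ i).symm _ _ _
  · have hiℓ' : i.1 ≠ ℓ.1 := fun h => hiℓ (Fin.ext h)
    simp only [swapRows, hℓ, if_neg hiℓ', if_neg hir]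
    exact T.apply_congr (Equiv.swap_apply_of_ne_of_ne hiℓ hir).symm _ _ _

theorem swapRows_apply_of_lt (T : Tab m) (i : Fin m) (u : Fin (i.1 + 1)) (hu : ℓ.1 < u.1) :
    swapRows m (ℓ.1 + 1) r T i u = T i u := by
  have hiℓ : i.1 ≠ ℓ.1 + 1 - 1 := by have := Fin.is_le u; omega
  simp only [swapRows, if_neg hiℓ, dif_neg (show ¬ u.1 < ℓ.1 + 1 by omega), ite_self]

theorem swapRows_swapRows (hℓr : ℓ < r) (T : Tab m) :
    swapRows m (ℓ.1 + 1) r (swapRows m (ℓ.1 + 1) r T) = T := by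
  funext i u
  rcases le_or_gt u.1 ℓ.1 with hu | hu
  · rw [swapRows_apply_of_le hℓr _ _ _ hu,
      swapRows_apply_of_le hℓr T (Equiv.swap ℓ r i) ⟨u.1, _⟩ hu]
    exact T.apply_congr (Equiv.swap_apply_self ℓ r i) _ _ _
  · rw [swapRows_apply_of_lt _ _ _ hu, swapRows_apply_of_lt _ _ _ hu]

theorem swapRows_ne_self (hℓr : ℓ < r) {T : Tab m} (hT : NonInt T) :
    swapRows m (ℓ.1 + 1) r T ≠ T := by
  intro h
  have hdiag := congrFun (congrFun h ℓ) ⟨ℓ.1, ℓ.1.lt_succ_self⟩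
  rw [swapRows_apply_of_le hℓr _ _ _ le_rfl, T.apply_congr (Equiv.swap_apply_left ℓ r) _ _
    (Nat.lt_succ_of_le hℓr.le)] at hdiag
  exact hℓr.ne' (hT r ℓ ℓ.1 hℓr.le le_rfl hdiag)

theorem nonInt_swapRows (hℓr : ℓ < r) {T : Tab m} (hT : NonInt T) :
    NonInt (swapRows m (ℓ.1 + 1) r T) := by
  intro i i' j hj hj' h
  rcases le_or_gt j ℓ.1 with hjℓ | hjℓ
  · rw [swapRows_apply_of_le hℓr _ _ _ hjℓ, swapRows_apply_of_le hℓr _ _ _ hjℓ] at h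
    exact (Equiv.swap ℓ r).injective
      (hT _ _ j (le_swap_apply hℓr.le hjℓ hj) (le_swap_apply hℓr.le hjℓ hj') h)
  · rw [swapRows_apply_of_lt _ _ _ hjℓ, swapRows_apply_of_lt _ _ _ hjℓ] at h
    exact hT i i' j hj hj' h

theorem forall_swapRows_apply (hℓr : ℓ < r) {T : Tab m} {P : ℕ → ℕ → Prop}
    (hT : ∀ i u, P u.1 (T i u)) : ∀ i u, P u.1 (swapRows m (ℓ.1 + 1) r T i u) := by
  intro i u
  rcases le_or_gt u.1 ℓ.1 with hu | hu
  · rw [swapRows_apply_of_le hℓr _ _ _ hu]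
    exact hT _ ⟨u.1, Nat.lt_succ_of_le (le_swap_apply hℓr.le hu (Fin.is_le u))⟩
  · rw [swapRows_apply_of_lt _ _ _ hu]
    exact hT i u

theorem compat_swapRows (hℓr : ℓ < r) {γ : ℕ → Bool} {T : Tab m} (hT : Compat γ T) :
    Compat γ (swapRows m (ℓ.1 + 1) r T) :=
  forall_swapRows_apply (P := fun u x => 1 ≤ u → #{l ∈ Icc 1 u | γ l = true} < x) hℓr hT

theorem firsts_swapRows (hℓr : ℓ < r) (T : Tab m) :
    firsts (swapRows m (ℓ.1 + 1) r T) = firsts T ∘ Equiv.swap ℓ r := by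
  funext i
  exact swapRows_apply_of_le hℓr _ _ _ (Nat.zero_le _)

theorem antitone_swapRows (hℓr : ℓ < r) {T : Tab m} (hT : ∀ i, Antitone (T i))
    (hjoin : T r ⟨ℓ.1 + 1, Nat.succ_lt_succ hℓr⟩ ≤ T ℓ ⟨ℓ.1, ℓ.1.lt_succ_self⟩) (i : Fin m) :
    Antitone (swapRows m (ℓ.1 + 1) r T i) := by
  intro u v huv
  have huv' : u.1 ≤ v.1 := huv
  rcases le_or_gt v.1 ℓ.1 with hv | hv
  · rw [swapRows_apply_of_le hℓr _ _ _ hv, swapRows_apply_of_le hℓr _ _ _ (huv'.trans hv)]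
    exact hT _ huv
  rw [swapRows_apply_of_lt _ _ _ hv]
  rcases le_or_gt u.1 ℓ.1 with hu | hu
  · rw [swapRows_apply_of_le hℓr _ _ _ hu]
    rcases eq_or_ne r i with rfl | hri
    · rw [T.apply_congr (Equiv.swap_apply_right ℓ r) _ _ (Nat.lt_succ_of_le hu)]
      calc T r v ≤ T r ⟨ℓ.1 + 1, Nat.succ_lt_succ hℓr⟩ := hT r (show ℓ.1 + 1 ≤ v.1 from hv)
        _ ≤ T ℓ ⟨ℓ.1, ℓ.1.lt_succ_self⟩ := hjoin
        _ ≤ T ℓ ⟨u.1, Nat.lt_succ_of_le hu⟩ := hT ℓ (show u.1 ≤ ℓ.1 from hu)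
    · have hiℓ : i ≠ ℓ := Fin.ne_of_val_ne (by have := Fin.is_le v; omega)
      rw [T.apply_congr (Equiv.swap_apply_of_ne_of_ne hiℓ hri.symm) _ _ u.2]
      exact hT i huv
  · rw [swapRows_apply_of_lt _ _ _ hu]
    exact hT i huv

end swapRows

section ones

variable {γ : ℕ → Bool} {ik : ℕ}

theorem card_ones_Icc_of_le (hmax : ∀ p, γ p = true → p ≤ ik) {u : ℕ} (hu : ik ≤ u) :
    #{l ∈ Icc 1 u | γ l = true} = #{l ∈ Icc 1 ik | γ l = true} := by
  congr 1
  ext l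
  simp only [mem_filter, mem_Icc]
  constructor
  · exact fun ⟨⟨h1, _⟩, hl⟩ => ⟨⟨h1, hmax l hl⟩, hl⟩
  · exact fun ⟨⟨h1, h2⟩, hl⟩ => ⟨⟨h1, h2.trans hu⟩, hl⟩

theorem card_ones_Icc_dropLast_add_one (hik1 : 1 ≤ ik) (hik : γ ik = true)
    (hmax : ∀ p, γ p = true → p ≤ ik) {u : ℕ} (hu : ik ≤ u + 1) :
    #{l ∈ Icc 1 u | (if l = ik then false else γ l) = true} + 1 =
      #{l ∈ Icc 1 ik | γ l = true} := by
  have hdrop : {l ∈ Icc 1 u | (if l = ik then false else γ l) = true} =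
      {l ∈ Icc 1 ik | γ l = true}.erase ik := by
    ext l
    simp only [mem_filter, mem_Icc, mem_erase]
    by_cases hl : l = ik
    · simp [hl]
    · simp only [hl, if_false, ne_eq, not_false_eq_true, true_and]
      constructor
      · exact fun ⟨⟨h1, _⟩, hγ⟩ => ⟨⟨h1, hmax l hγ⟩, hγ⟩
      · exact fun ⟨⟨h1, h2⟩, hγ⟩ => ⟨⟨h1, by omega⟩, hγ⟩
  rw [hdrop, card_erase_add_one (mem_filter.mpr ⟨mem_Icc.mpr ⟨hik1, le_rfl⟩, hik⟩)]

theorem card_ones_le_of_rowCompat_dropLast (hik1 : 1 ≤ ik) (hik : γ ik = true)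
    (hmax : ∀ p, γ p = true → p ≤ ik) {n : ℕ} {lam : Fin n → ℕ}
    (hlam : RowCompat (fun p => if p = ik then false else γ p) lam) (u : Fin n)
    (hu : ik ≤ u.1 + 1) (hpos : 1 ≤ lam u) :
    #{l ∈ Icc 1 ik | γ l = true} ≤ lam u := by
  rw [← card_ones_Icc_dropLast_add_one hik1 hik hmax hu]
  rcases Nat.eq_zero_or_pos u.1 with hu0 | hu0
  · simpa [hu0] using hpos
  · exact hlam u hu0

end ones

theorem statement14_general (m : ℕ) (γ : ℕ → Bool)
    (hsupp : ∀ p, γ p = true → 1 ≤ p ∧ p ≤ m - 1)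
    (ik : ℕ) (hik : γ ik = true) (hmax : ∀ p, γ p = true → p ≤ ik)
    (k : ℕ) (hk : k = ((Finset.Icc 1 ik).filter fun l => γ l = true).card)
    (T : Tab m) (hTtab : T ∈ tabFinset m) (hNI : NonInt T)
    (hC' : Compat (fun p => if p = ik then false else γ p) T)
    (c : ℕ) (hcik : ik ≤ c)
    (r : Fin m) (hr : c ≤ r.1) (hrk : T r ⟨c, Nat.lt_succ_of_le hr⟩ = k) :
    swapRows m c r T ∈ tabFinset m ∧
    NonInt (swapRows m c r T) ∧
    Compat (fun p => if p = ik then false else γ p) (swapRows m c r T) ∧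
    ¬ Compat γ (swapRows m c r T) ∧
    swapRows m c r (swapRows m c r T) = T ∧
    swapRows m c r T ≠ T ∧
    sgn (firsts (swapRows m c r T)) = - sgn (firsts T) := by
  have hik1 : 1 ≤ ik := (hsupp ik hik).1
  obtain ⟨ℓ, rfl⟩ : ∃ ℓ : Fin m, c = ℓ.1 + 1 := ⟨⟨c - 1, by omega⟩, by simp only; omega⟩
  have hℓr : ℓ < r := hr
  obtain ⟨hrange, hanti⟩ := mem_tabFinset_iff_s14.mp hTtab
  have hjoin : T r ⟨ℓ.1 + 1, Nat.succ_lt_succ hℓr⟩ ≤ T ℓ ⟨ℓ.1, ℓ.1.lt_succ_self⟩ :=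
    hrk.trans_le <| hk ▸ card_ones_le_of_rowCompat_dropLast hik1 hik hmax (hC' ℓ) _ hcik
      (mem_Icc.mp (hrange ℓ _)).1
  refine ⟨mem_tabFinset_iff_s14.mpr ⟨forall_swapRows_apply (P := fun _ x => x ∈ Icc 1 m) hℓr
      hrange, antitone_swapRows hℓr hanti hjoin⟩, nonInt_swapRows hℓr hNI,
    compat_swapRows hℓr hC', fun hcompat => ?_, swapRows_swapRows hℓr T,
    swapRows_ne_self hℓr hNI, ?_⟩
  · have hbad := hcompat r ⟨ℓ.1 + 1, Nat.succ_lt_succ hℓr⟩ (Nat.le_add_left 1 _)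
    rw [swapRows_apply_of_lt _ _ _ ℓ.1.lt_succ_self, hrk, card_ones_Icc_of_le hmax hcik,
      ← hk] at hbad
    exact lt_irrefl k hbad
  · rw [firsts_swapRows hℓr, sgn_comp_perm hNI.injective_firsts,
      Equiv.Perm.sign_swap hℓr.ne]
    simp

/-- The map `ι` is a well-defined fixed-point-free involution on the set of
non-intersecting triangular tableaux compatible with `γ'` but not with `γ`, and it
reverses the sign of the attached permutation.  Here `c` (0-indexed) is the minimal
bad column (paper's `j_min`, with `ℓ = j_min - 1 = c` in paper indexing), `r` is the
row whose entry in that column equals `k` (the number of `1`s in `γ`), and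
`ι T = swapRows m c r T`. -/
theorem statement14 (m : ℕ) (γ : ℕ → Bool)
    (hsupp : ∀ p, γ p = true → 1 ≤ p ∧ p ≤ m - 1)
    (ik : ℕ) (hik : γ ik = true) (hmax : ∀ p, γ p = true → p ≤ ik)
    (k : ℕ) (hk : k = ((Finset.Icc 1 ik).filter fun l => γ l = true).card)
    (T : Tab m) (hTtab : T ∈ tabFinset m) (hNI : NonInt T)
    (hC' : Compat (fun p => if p = ik then false else γ p) T) (hC : ¬ Compat γ T)
    (c : ℕ) (hcik : ik ≤ c)
    (hcmin : ∀ c', ik ≤ c' →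
      (∃ i : Fin m, ∃ h : c' ≤ i.1, T i ⟨c', Nat.lt_succ_of_le h⟩ = k) → c ≤ c')
    (r : Fin m) (hr : c ≤ r.1) (hrk : T r ⟨c, Nat.lt_succ_of_le hr⟩ = k) :
    swapRows m c r T ∈ tabFinset m ∧
    NonInt (swapRows m c r T) ∧
    Compat (fun p => if p = ik then false else γ p) (swapRows m c r T) ∧
    ¬ Compat γ (swapRows m c r T) ∧
    swapRows m c r (swapRows m c r T) = T ∧
    swapRows m c r T ≠ T ∧
    sgn (firsts (swapRows m c r T)) = - sgn (firsts T) :=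
  statement14_general m γ hsupp ik hik hmax k hk T hTtab hNI hC' c hcik r hr hrk

end
end

section
/- For k ≥ 1 and a partition λ of length i with first part j containing each of j−1,...,j−k+1 as a part (so λ ∈ the (k)-indexed set with k+1 levels), the total signed weight of all arrow-extensions of λ ∈ P_j^i[k+1] equals w(λ)·(a_j − a_{j-k-1}): there are exactly k+1 left extensions and k+1 right extensions, contributing w(λ)·Σ_{r=0}^{k}[(a_{j-r} + b_{u_r}) − (a_{j-r-1} + b_{u_r})] = w(λ)(a_j − a_{j-k-1}), where u_0,...,u_k are the positions of the descents from j−r to j−r−1 within λ. -/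
/-! The arrow positions of `λ` are the descents `λ_u = λ_{u+1} + 1` with `λ_{u+1} ≥ j - k - 1`.
Since `λ` is weakly decreasing it is injective on its descents, and since it starts at `j` and
takes every value `j - 1, …, j - k - 1`, it maps the arrow positions onto `{j - k, …, j}`.
In the difference of the left and the right extension at a position the `b`-terms cancel,
so the total weight telescopes to `w(λ) (a_j - a_{j-k-1})`. -/

open Finset

attribute [local instance] Classical.propDecidable

noncomputable section

theorem Finset.sum_Ioc_sub_sub_one {M : Type*} [AddCommGroup M] (f : ℕ → M) {lo top : ℕ}
    (h : lo ≤ top) : ∑ m ∈ Ioc lo top, (f m - f (m - 1)) = f top - f lo := by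
  induction top, h using Nat.le_induction with
  | base => simp
  | succ top h ih => rw [sum_Ioc_succ_top h, ih, Nat.add_sub_cancel]; abel

/-- The positions where an arrow of an extension of `λ` may be placed, for `lo = j - k - 1`. -/
def arrowPositions (lo : ℕ) {n : ℕ} (lam : Fin n → ℕ) : Finset (Fin n) :=
  univ.filter fun u => ∃ h : u.1 + 1 < n, lam ⟨u.1 + 1, h⟩ + 1 = lam u ∧ lo ≤ lam ⟨u.1 + 1, h⟩

section Antitone

variable {n : ℕ} {lam : Fin n → ℕ}

theorem Antitone.lt_of_mem_arrowPositions (hlam : Antitone lam) {lo : ℕ} {u v : Fin n}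
    (hu : u ∈ arrowPositions lo lam) (huv : u < v) : lam v < lam u := by
  obtain ⟨h, hdrop, -⟩ := (mem_filter.mp hu).2
  have : lam v ≤ lam ⟨u.1 + 1, h⟩ := hlam (Fin.le_def.mpr huv)
  omega

theorem Antitone.injOn_arrowPositions (hlam : Antitone lam) (lo : ℕ) :
    Set.InjOn lam (arrowPositions lo lam) := by
  intro u hu v hv huv
  rcases lt_trichotomy u v with h | h | h
  · exact absurd huv (hlam.lt_of_mem_arrowPositions hu h).ne'
  · exact h
  · exact absurd huv (hlam.lt_of_mem_arrowPositions hv h).ne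

/-- Discrete intermediate value theorem; the step is taken after the last occurrence of `m + 1`. -/
theorem Antitone.exists_succ_eq_of_succ_mem_range (hlam : Antitone lam) {m : ℕ}
    (hsucc : m + 1 ∈ Set.range lam) (hm : m ∈ Set.range lam) :
    ∃ w : Fin n, ∃ h : w.1 + 1 < n, lam w = m + 1 ∧ lam ⟨w.1 + 1, h⟩ = m := by
  obtain ⟨v, hv⟩ := hm
  let S := univ.filter fun u => lam u = m + 1
  have hS : S.Nonempty := by
    obtain ⟨u, hu⟩ := hsucc
    exact ⟨u, mem_filter.mpr ⟨mem_univ u, hu⟩⟩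
  set w := S.max' hS
  have hw : lam w = m + 1 := (mem_filter.mp (S.max'_mem hS)).2
  have hwv : w.1 < v.1 := by
    by_contra! hvw
    have := hlam (Fin.le_def.mpr hvw)
    omega
  have h : w.1 + 1 < n := by omega
  have hnext : lam ⟨w.1 + 1, h⟩ ≠ m + 1 := fun heq =>
    w.1.not_succ_le_self <|
      Fin.le_def.mp (S.le_max' ⟨w.1 + 1, h⟩ (mem_filter.mpr ⟨mem_univ _, heq⟩))
  have hle : lam ⟨w.1 + 1, h⟩ ≤ lam w := hlam (Fin.le_def.mpr (Nat.le_succ _))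
  have hge : lam v ≤ lam ⟨w.1 + 1, h⟩ := hlam (Fin.le_def.mpr hwv)
  exact ⟨w, h, hw, by omega⟩

theorem Antitone.image_arrowPositions (hlam : Antitone lam) {lo top : ℕ}
    (hle : ∀ u, lam u ≤ top) (hhit : ∀ m, lo ≤ m → m ≤ top → m ∈ Set.range lam) :
    (arrowPositions lo lam).image lam = Ioc lo top := by
  ext m
  simp only [mem_image, mem_Ioc, arrowPositions, mem_filter, mem_univ, true_and]
  constructor
  · rintro ⟨u, ⟨h, hdrop, hlo⟩, rfl⟩
    exact ⟨by omega, hle u⟩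
  · rintro ⟨hlo, htop⟩
    obtain ⟨w, h, hw, hnext⟩ := hlam.exists_succ_eq_of_succ_mem_range
      (m := m - 1) (by rw [Nat.sub_add_cancel (by omega)]; exact hhit m (by omega) htop)
      (hhit (m - 1) (by omega) (by omega))
    exact ⟨w, ⟨h, by omega, by omega⟩, by omega⟩

end Antitone

section PartSet

variable {j i k : ℕ} {lam : Fin i → ℕ}

theorem mem_PartSet : lam ∈ PartSet j i k ↔ (∀ u, lam u ∈ Icc 1 j) ∧ Antitone lam ∧
    (∃ h : 0 < i, lam ⟨0, h⟩ = j) ∧ ∀ l, 1 ≤ l → l ≤ k → ∃ u, lam u = j - l := by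
  simp only [PartSet, Finset.mem_filter, Fintype.mem_piFinset]
  rfl

theorem antitone_of_mem_PartSet (hlam : lam ∈ PartSet j i k) : Antitone lam :=
  (mem_PartSet.mp hlam).2.1

theorem le_of_mem_PartSet (hlam : lam ∈ PartSet j i k) (u : Fin i) : lam u ≤ j :=
  (mem_Icc.mp ((mem_PartSet.mp hlam).1 u)).2

theorem mem_range_of_mem_PartSet (hlam : lam ∈ PartSet j i k) {m : ℕ} (hkm : j - k ≤ m)
    (hmj : m ≤ j) : m ∈ Set.range lam := by
  obtain ⟨-, -, ⟨_, hfirst⟩, hparts⟩ := mem_PartSet.mp hlam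
  rcases hmj.eq_or_lt with rfl | hmj
  · exact ⟨_, hfirst⟩
  · obtain ⟨u, hu⟩ := hparts (j - m) (by omega) (by omega)
    exact ⟨u, by omega⟩

theorem lt_of_mem_PartSet (hk : 0 < k) (hlam : lam ∈ PartSet j i k) : k < j := by
  obtain ⟨hpos, -, -, hparts⟩ := mem_PartSet.mp hlam
  obtain ⟨u, hu⟩ := hparts k hk le_rfl
  have := (mem_Icc.mp (hpos u)).1
  omega

end PartSet

theorem statement15_general {R : Type*} [CommRing R] (a b : ℕ → R) (j i k : ℕ)
    (lam : Fin i → ℕ) (hlam : lam ∈ PartSet j i (k + 1)) :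
    (univ.filter fun u : Fin i => ∃ h : u.1 + 1 < i,
        lam ⟨u.1 + 1, h⟩ + 1 = lam u ∧ j - k - 1 ≤ lam ⟨u.1 + 1, h⟩).card = k + 1 ∧
    ∑ u ∈ univ.filter fun u : Fin i => ∃ h : u.1 + 1 < i,
          lam ⟨u.1 + 1, h⟩ + 1 = lam u ∧ j - k - 1 ≤ lam ⟨u.1 + 1, h⟩,
        (wt a b lam * (a (lam u) + b (u.1 + 1)) -
          wt a b lam * (a (lam u - 1) + b (u.1 + 1))) =
      wt a b lam * (a j - a (j - k - 1)) := by
  change (arrowPositions (j - k - 1) lam).card = k + 1 ∧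
    ∑ u ∈ arrowPositions (j - k - 1) lam, _ = _
  have hkj : k + 1 < j := lt_of_mem_PartSet k.succ_pos hlam
  have hanti := antitone_of_mem_PartSet hlam
  have hinj := hanti.injOn_arrowPositions (j - k - 1)
  have himage : (arrowPositions (j - k - 1) lam).image lam = Ioc (j - k - 1) j :=
    hanti.image_arrowPositions (le_of_mem_PartSet hlam)
      fun _ hlo hmj => mem_range_of_mem_PartSet hlam (by omega) hmj
  constructor
  · rw [← card_image_of_injOn hinj, himage, Nat.card_Ioc]
    omega
  · calc _ = wt a b lam * ∑ u ∈ arrowPositions (j - k - 1) lam, (a (lam u) - a (lam u - 1)) :=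
          by rw [mul_sum]; congr! 1; ring
      _ = wt a b lam * ∑ m ∈ Ioc (j - k - 1) j, (a m - a (m - 1)) := by
          rw [← himage, sum_image hinj]
      _ = wt a b lam * (a j - a (j - k - 1)) := by
          rw [sum_Ioc_sub_sub_one a (by omega)]

/-- For a partition `λ ∈ PartSet j i (k+1)`, there are exactly `k+1` positions `u`
with `λ_u > λ_{u+1} = λ_u − 1 ≥ j−k−1` (the possible arrow positions), and the total
signed weight of the `2(k+1)` arrow-extensions of `λ` equals `w(λ)(a_j − a_{j-k-1})`:
a left extension at `u` contributes `w(λ)(a_{λ_u} + b_u)` and a right extension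
contributes `−w(λ)(a_{λ_{u+1}} + b_u)` (paper's 1-indexed `u`; here positions are
0-indexed so the `b`-index is `u+1`). -/
theorem statement15 {R : Type*} [CommRing R] (a b : ℕ → R) (j i k : ℕ)
    (hj : k + 1 < j) (lam : Fin i → ℕ) (hlam : lam ∈ PartSet j i (k + 1)) :
    (univ.filter fun u : Fin i => ∃ h : u.1 + 1 < i,
        lam ⟨u.1 + 1, h⟩ + 1 = lam u ∧ j - k - 1 ≤ lam ⟨u.1 + 1, h⟩).card = k + 1 ∧
    ∑ u ∈ univ.filter fun u : Fin i => ∃ h : u.1 + 1 < i,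
          lam ⟨u.1 + 1, h⟩ + 1 = lam u ∧ j - k - 1 ≤ lam ⟨u.1 + 1, h⟩,
        (wt a b lam * (a (lam u) + b (u.1 + 1)) -
          wt a b lam * (a (lam u - 1) + b (u.1 + 1))) =
      wt a b lam * (a j - a (j - k - 1)) :=
  statement15_general a b j i k lam hlam

end
end

section
/- For a superpartition Λ of fermionic degree m and degree n, in N = n − m(m−1)/2 + m variables, every 0-admissible tableau T of shape Λ̃ with evaluation (|T|_1,...,|T|_m,1,...,1), where [|T|_1+1,...,|T|_m+1] is a permutation of {1,...,m}, must have the letter i in cell (i,1) for every i = N−ℓ(Λ^s)+1, ..., N; in particular all these cells are 0-critical. -/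
/-!
The rows of `Λ̃` after the fermionic ones weakly increase in length, so its last `ℓ(Λˢ)` rows
are the nonempty ones. In column 1 the letters are distinct and row `i` holds a letter `c ≥ i`;
going up from row `N`, a letter `c > i` is already taken by row `c`, which forces `c = i`.
-/

open Finset

attribute [local instance] Classical.propDecidable

noncomputable section

/-- `T : Fin N → ℕ → ℕ` is a 0-admissible tableau of shape `η` (a composition with
`N` rows, row `i` having cells in columns `1, …, η i`) if:
* every letter is in `{1, …, N}`;
* there are never two identical letters in the same column;
* if cell `(i,j)` is filled with letter `c`, then `c` cannot occur in column `j+1`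
  in a row strictly below row `i`;
* in the first column, letter `i` cannot occur strictly below row `i` (i.e. the
  letter in cell `(i,1)` is at least `i`, with 1-indexed rows). -/
def Adm (N : ℕ) (η : Fin N → ℕ) (T : Fin N → ℕ → ℕ) : Prop :=
  (∀ (i : Fin N) (j : ℕ), 1 ≤ j → j ≤ η i → 1 ≤ T i j ∧ T i j ≤ N) ∧
  (∀ (i i' : Fin N) (j : ℕ), 1 ≤ j → j ≤ η i → j ≤ η i' → T i j = T i' j → i = i') ∧
  (∀ (i i' : Fin N) (j : ℕ), i < i' → 1 ≤ j → j ≤ η i → j + 1 ≤ η i' →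
    T i' (j + 1) ≠ T i j) ∧
  (∀ i : Fin N, 1 ≤ η i → i.1 + 1 ≤ T i 1)

/-- `evalT N η T c` is the number of occurrences of the letter `c` in `T`. -/
def evalT (N : ℕ) (η : Fin N → ℕ) (T : Fin N → ℕ → ℕ) (c : ℕ) : ℕ :=
  ∑ i : Fin N, ((Finset.Icc 1 (η i)).filter fun j => T i j = c).card

theorem one_le_of_sub_card_nonempty_le {N m : ℕ} {η : Fin N → ℕ}
    (hmono : ∀ i i' : Fin N, i ≤ i' → m ≤ i.1 → η i ≤ η i') {j : Fin N}
    (hj : N - #{i : Fin N | m ≤ i.1 ∧ 1 ≤ η i} ≤ j.1) : 1 ≤ η j := by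
  by_contra! hj0
  have hsub : ({i : Fin N | m ≤ i.1 ∧ 1 ≤ η i} : Finset (Fin N)) ⊆ Ioi j := by
    intro x hx
    simp only [mem_filter, mem_univ, true_and] at hx
    by_contra! hxj
    have := hmono x j (not_lt.mp (by simpa using hxj)) hx.1
    omega
  have hcard := card_le_card hsub
  rw [Fin.card_Ioi] at hcard
  omega

theorem Adm.col_one_eq_of_nonempty {N : ℕ} {η : Fin N → ℕ} {T : Fin N → ℕ → ℕ}
    (hT : Adm N η T) {k : ℕ} (hne : ∀ j : Fin N, k ≤ j.1 → 1 ≤ η j) (j : Fin N)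
    (hj : k ≤ j.1) : T j 1 = j.1 + 1 := by
  obtain ⟨hbound, hcol, -, hfirst⟩ := hT
  induction j using WellFoundedGT.induction with
  | _ j ih =>
    have hη := hne j hj
    have hge := hfirst j hη
    have hle := (hbound j 1 le_rfl hη).2
    by_contra hT1
    let j' : Fin N := ⟨T j 1 - 1, by omega⟩
    have hjj' : j < j' := Fin.lt_def.mpr (by simp only [j']; omega)
    have hj'1 : T j' 1 = T j 1 := by
      rw [ih j' hjj' (by omega)]
      simp only [j']
      omega
    exact hjj'.ne (hcol j j' 1 le_rfl hη (hne j' (by omega)) hj'1.symm)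

theorem statement17_general (N m : ℕ) (η : Fin N → ℕ)
    (hsym : ∀ i i' : Fin N, i ≤ i' → m ≤ i.1 → η i ≤ η i')
    (T : Fin N → ℕ → ℕ) (hT : Adm N η T)
    (ℓs : ℕ) (hℓs : ℓs = (univ.filter fun i : Fin N => m ≤ i.1 ∧ 1 ≤ η i).card) :
    ∀ i : Fin N, N - ℓs ≤ i.1 → 1 ≤ η i ∧ T i 1 = i.1 + 1 := by
  have hne : ∀ j : Fin N, N - ℓs ≤ j.1 → 1 ≤ η j := fun j hj =>
    one_le_of_sub_card_nonempty_le hsym (hℓs ▸ hj)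
  exact fun i hi => ⟨hne i hi, hT.col_one_eq_of_nonempty hne i hi⟩

/-- For a 0-admissible tableau `T` of shape `Λ̃` (first `m` rows strictly increasing
in length — the fermionic portion — and the remaining rows weakly increasing), in
`N = n − m(m−1)/2 + m` variables, with each letter of `{m+1, …, N}` occurring exactly
once and `[|T|₁+1, …, |T|_m+1]` a permutation of `{1, …, m}`: every row
`i` with `i ≥ N − ℓ(Λˢ) + 1` (1-indexed) is nonempty and holds the letter `i` in its
first cell; in particular all these cells are 0-critical. -/
theorem statement17 (N m : ℕ) (hm : m ≤ N) (η : Fin N → ℕ)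
    (hferm : ∀ i i' : Fin N, i < i' → i'.1 < m → η i < η i')
    (hsym : ∀ i i' : Fin N, i ≤ i' → m ≤ i.1 → η i ≤ η i')
    (hN : N = (∑ i : Fin N, η i) - m * (m - 1) / 2 + m)
    (T : Fin N → ℕ → ℕ) (hT : Adm N η T)
    (hval1 : ∀ c, m + 1 ≤ c → c ≤ N → evalT N η T c = 1)
    (hlt : ∀ i : Fin m, evalT N η T (i.1 + 1) < m)
    (hinj : Function.Injective fun i : Fin m => evalT N η T (i.1 + 1))
    (ℓs : ℕ) (hℓs : ℓs = (univ.filter fun i : Fin N => m ≤ i.1 ∧ 1 ≤ η i).card) :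
    ∀ i : Fin N, N - ℓs ≤ i.1 → 1 ≤ η i ∧ T i 1 = i.1 + 1 :=
  statement17_general N m η hsym T hT ℓs hℓs

end
end

section
/- Let P be a 'good' configuration: a filling of a subset of cells of the fermionic rows of Λ̃ with letters from {1,...,m} such that [|P|_1+1,...,|P|_m+1] is a permutation of {1,...,m}, with letter i occurring in columns 1,...,|P|_i, and arising from a 0-admissible tableau. Then for each letter i, the rows i_1, i_2, ..., i_{|P|_i} containing letter i in columns 1, 2, ..., |P|_i satisfy m ≥ i ≥ i_1 ≥ i_2 ≥ ... ≥ i_{|P|_i}. In particular all cells of P lie in the first m rows. -/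
open Finset

attribute [local instance] Classical.propDecidable

noncomputable section

/-! The adjacency condition forbids the row of a letter `c` from moving down from one column to
the next, and since `c` fills an initial segment of columns, its rows weakly decrease from column
`1` on. In column `1` the row of `c` is at most `c`, so every row holding `c` is. -/

namespace Adm

variable {N : ℕ} {η : Fin N → ℕ} {T : Fin N → ℕ → ℕ} {c k : ℕ}

theorem row_le_of_succ_col (hT : Adm N η T) {i i' : Fin N} {j : ℕ} (hj : 1 ≤ j)
    (hji : j ≤ η i) (hji' : j + 1 ≤ η i') (h : T i' (j + 1) = T i j) : i' ≤ i :=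
  not_lt.mp fun hlt => hT.2.2.1 i i' j hlt hj hji hji' h

theorem exists_mem_col_of_le
    (hc : ∀ j, 1 ≤ j → ((∃ i : Fin N, j ≤ η i ∧ T i j = c) ↔ j ≤ k))
    {j j' : ℕ} (hj : 1 ≤ j) (hjj' : j ≤ j') (h : ∃ i : Fin N, j' ≤ η i ∧ T i j' = c) :
    ∃ i : Fin N, j ≤ η i ∧ T i j = c :=
  (hc j hj).2 (hjj'.trans ((hc j' (hj.trans hjj')).1 h))

theorem row_antitone_of_col_le (hT : Adm N η T)
    (hc : ∀ j, 1 ≤ j → ((∃ i : Fin N, j ≤ η i ∧ T i j = c) ↔ j ≤ k))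
    {i i' : Fin N} {j j' : ℕ} (hj : 1 ≤ j) (hjj' : j ≤ j') (hji : j ≤ η i)
    (hj'i' : j' ≤ η i') (hTi : T i j = c) (hTi' : T i' j' = c) : i' ≤ i := by
  induction j', hjj' using Nat.le_induction generalizing i' with
  | base => exact (hT.2.1 i i' j hj hji hj'i' (hTi.trans hTi'.symm)).ge
  | succ j' hjj' ih =>
    obtain ⟨i₀, hi₀, hTi₀⟩ :=
      exists_mem_col_of_le hc (hj.trans hjj') j'.le_succ ⟨i', hj'i', hTi'⟩
    calc i' ≤ i₀ := hT.row_le_of_succ_col (hj.trans hjj') hi₀ hj'i' (hTi'.trans hTi₀.symm)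
      _ ≤ i := ih hi₀ hTi₀

theorem row_lt_of_mem (hT : Adm N η T)
    (hc : ∀ j, 1 ≤ j → ((∃ i : Fin N, j ≤ η i ∧ T i j = c) ↔ j ≤ k))
    {i : Fin N} {j : ℕ} (hj : 1 ≤ j) (hji : j ≤ η i) (hTi : T i j = c) : i.1 + 1 ≤ c := by
  obtain ⟨i₁, hi₁, hTi₁⟩ := exists_mem_col_of_le hc le_rfl hj ⟨i, hji, hTi⟩
  have hii₁ : i ≤ i₁ := hT.row_antitone_of_col_le hc le_rfl hj hi₁ hji hTi₁ hTi
  calc i.1 + 1 ≤ i₁.1 + 1 := Nat.succ_le_succ hii₁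
    _ ≤ c := hTi₁ ▸ hT.2.2.2 i₁ hi₁

end Adm

theorem statement18_general (N m : ℕ) (η : Fin N → ℕ)
    (T : Fin N → ℕ → ℕ) (hT : Adm N η T)
    (hgood : ∀ c, 1 ≤ c → c ≤ m → ∀ j : ℕ, 1 ≤ j →
      ((∃ i : Fin N, j ≤ η i ∧ T i j = c) ↔ j ≤ evalT N η T c)) :
    ∀ c, 1 ≤ c → c ≤ m → ∀ (i i' : Fin N) (j j' : ℕ), 1 ≤ j → j ≤ j' →
      j ≤ η i → j' ≤ η i' → T i j = c → T i' j' = c →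
      i'.1 ≤ i.1 ∧ i.1 + 1 ≤ c := by
  intro c hc1 hcm i i' j j' hj hjj' hji hj'i' hTi hTi'
  have hc := hgood c hc1 hcm
  exact ⟨hT.row_antitone_of_col_le hc hj hjj' hji hj'i' hTi hTi',
    hT.row_lt_of_mem hc hj hji hTi⟩

/-- For a good configuration arising from a 0-admissible tableau `T` of shape `Λ̃`:
if each letter `c ∈ {1, …, m}` occurs exactly in columns `1, …, |T|_c`, then the rows
containing the letter `c` in successive columns weakly decrease, and every cell
holding the letter `c` lies in a row `≤ c` (1-indexed); in particular all cells with
letters `≤ m` lie in the first `m` rows. -/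
theorem statement18 (N m : ℕ) (hm : m ≤ N) (η : Fin N → ℕ)
    (hferm : ∀ i i' : Fin N, i < i' → i'.1 < m → η i < η i')
    (hsym : ∀ i i' : Fin N, i ≤ i' → m ≤ i.1 → η i ≤ η i')
    (T : Fin N → ℕ → ℕ) (hT : Adm N η T)
    (hlt : ∀ i : Fin m, evalT N η T (i.1 + 1) < m)
    (hinj : Function.Injective fun i : Fin m => evalT N η T (i.1 + 1))
    (hgood : ∀ c, 1 ≤ c → c ≤ m → ∀ j : ℕ, 1 ≤ j →
      ((∃ i : Fin N, j ≤ η i ∧ T i j = c) ↔ j ≤ evalT N η T c)) :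
    ∀ c, 1 ≤ c → c ≤ m → ∀ (i i' : Fin N) (j j' : ℕ), 1 ≤ j → j ≤ j' →
      j ≤ η i → j' ≤ η i' → T i j = c → T i' j' = c →
      i'.1 ≤ i.1 ∧ i.1 + 1 ≤ c :=
  statement18_general N m η T hT hgood

end
end
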